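/- Let Ω : ℝ → Matrix (Fin 2) (Fin 2) ℂ be differentiable with Ω'(s) = ω(s)·Ω(s), where ω(s) is skew-hermitian (ω(s)ᴴ = -ω(s)) for all s, and suppose Ω(0) is unitary. Then Ω(s) is unitary for all s. -/

import Mathlib

open Matrix

/-! Skew-hermitian `ω` makes `s ↦ Ω(s)ᴴ Ω(s)` stationary: by the product rule its derivative is
`(ωΩ)ᴴΩ + Ωᴴ(ωΩ) = Ωᴴ(ωᴴ + ω)Ω = 0`, so it keeps its initial value `1`. -/

namespace Matrix

variable {l m n : Type*} {x : ℝ}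

theorem hasDerivAt_mul_apply [Fintype m] {𝔸 : Type*} [NormedRing 𝔸] [NormedAlgebra ℝ 𝔸]
    {A : ℝ → Matrix l m 𝔸} {B : ℝ → Matrix m n 𝔸} {A' : Matrix l m 𝔸} {B' : Matrix m n 𝔸}
    (hA : ∀ i j, HasDerivAt (fun t => A t i j) (A' i j) x)
    (hB : ∀ i j, HasDerivAt (fun t => B t i j) (B' i j) x) (i : l) (k : n) :
    HasDerivAt (fun t => (A t * B t) i k) ((A' * B x + A x * B') i k) x := by
  simp only [mul_apply, add_apply, ← Finset.sum_add_distrib]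
  exact HasDerivAt.fun_sum fun j _ => (hA i j).fun_mul (hB j k)

theorem hasDerivAt_conjTranspose_apply {F : Type*} [NormedAddCommGroup F] [NormedSpace ℝ F]
    [StarAddMonoid F] [StarModule ℝ F] [ContinuousStar F]
    {A : ℝ → Matrix m n F} {A' : Matrix m n F}
    (hA : ∀ i j, HasDerivAt (fun t => A t i j) (A' i j) x) (j : n) (i : m) :
    HasDerivAt (fun t => (A t)ᴴ j i) (A'ᴴ j i) x :=
  (hA i j).star

theorem conjTranspose_mul_add_conjTranspose_mul_eq_zero [Fintype m] {R : Type*} [Ring R]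
    [StarRing R] {ω : Matrix m m R} (hω : ωᴴ = -ω) (U : Matrix m n R) :
    (ω * U)ᴴ * U + Uᴴ * (ω * U) = 0 := by
  rw [conjTranspose_mul, hω, Matrix.mul_assoc, Matrix.neg_mul, Matrix.mul_neg, neg_add_cancel]

theorem eq_of_hasDerivAt_apply_zero {F : Type*} [NormedAddCommGroup F] [NormedSpace ℝ F]
    {A : ℝ → Matrix m n F} (hA : ∀ t i j, HasDerivAt (fun s => A s i j) 0 t) (s t : ℝ) :
    A s = A t := by
  ext i j
  exact is_const_of_deriv_eq_zero (fun u => (hA u i j).differentiableAt)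
    (fun u => (hA u i j).deriv) s t

end Matrix

theorem unitary_propagation_general
    (ω Ω : ℝ → Matrix (Fin 2) (Fin 2) ℂ)
    (hskew : ∀ s, (ω s)ᴴ = -(ω s))
    (hODE : ∀ s i j, HasDerivAt (fun t => Ω t i j) ((ω s * Ω s) i j) s)
    (h0 : Ω 0 ∈ Matrix.unitaryGroup (Fin 2) ℂ) :
    ∀ s, (Ω s)ᴴ * Ω s = 1 := by
  have stationary : ∀ t i j, HasDerivAt (fun u => ((Ω u)ᴴ * Ω u) i j) 0 t := fun t i j => by
    simpa only [conjTranspose_mul_add_conjTranspose_mul_eq_zero (hskew t), Matrix.zero_apply] using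
      hasDerivAt_mul_apply (hasDerivAt_conjTranspose_apply (hODE t)) (hODE t) i j
  intro s
  rw [eq_of_hasDerivAt_apply_zero stationary s 0]
  exact h0.1

theorem unitary_propagation
    (ω Ω : ℝ → Matrix (Fin 2) (Fin 2) ℂ)
    (hωcont : ∀ i j, Continuous fun s => ω s i j)
    (hskew : ∀ s, (ω s)ᴴ = -(ω s))
    (hODE : ∀ s i j, HasDerivAt (fun t => Ω t i j) ((ω s * Ω s) i j) s)
    (h0 : Ω 0 ∈ Matrix.unitaryGroup (Fin 2) ℂ) :
    ∀ s, (Ω s)ᴴ * Ω s = 1 :=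
  unitary_propagation_general ω Ω hskew hODE h0
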